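/- Suppose |r(λ_n)| > 0 and that the n×n matrix X_n* B Y_0 is invertible. Then for each j = 1,…,n there exists a constant α_j ≥ 0 such that for all iterations k ≥ 1, min over z in the column span of Z_k of ‖x_j − z‖_B ≤ α_j · |r(λ_{n+1})/r(λ_j)|^k. Equivalently, ‖(I − P_k) x_j‖_B ≤ α_j |r(λ_{n+1})/r(λ_j)|^k where P_k is the B-orthogonal projector onto the column span of Z_k. -/

import Mathlib

open Matrix ComplexOrder

/-!
Since the `W k` are invertible, the column span of `Z k` contains that of `r(M)^k Y₀`, and
`r(M)^k = X diag(r(λᵢ)^k) X⁻¹`. Let `u` solve `(X_nᴴ B Y₀) u = e_j` and put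
`c = X⁻¹ Y₀ u = Xᴴ B Y₀ u`, so that `cᵢ = δᵢⱼ` for `i < n`. The vector
`z = r(λⱼ)^{-k} r(M)^k Y₀ u` has `X`-coordinates `(r(λᵢ)/r(λⱼ))^k cᵢ`, so `x_j - z` has
coordinates `0` for `i < n` and `-(r(λᵢ)/r(λⱼ))^k cᵢ` for `i ≥ n`, each of modulus at most
`|r(λ_{n+1})/r(λⱼ)|^k |cᵢ|`. As `Xᴴ B X = 1`, the `B`-norm of `X d` is the Euclidean norm
of `d`, whence the bound with `α = ‖c‖`.
-/
namespace Matrix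

variable {𝕜 R : Type*} [RCLike 𝕜] [CommRing R] {m n : Type*} [Fintype n] [DecidableEq n]

lemma conj_diagonal_pow {X : Matrix n n R} (hX : IsUnit X.det) (d : n → R) (k : ℕ) :
    (X * diagonal d * X⁻¹) ^ k = X * diagonal (d ^ k) * X⁻¹ := by
  rw [← diagonal_pow]
  exact (nonsingInvUnit X hX).conj_pow _ k

lemma re_star_mulVec_dotProduct_mulVec_mulVec [Fintype m] {B : Matrix m m 𝕜}
    {X : Matrix m n 𝕜} (hX : Xᴴ * B * X = 1) (d : n → 𝕜) :
    RCLike.re (star (X *ᵥ d) ⬝ᵥ B *ᵥ (X *ᵥ d)) = ∑ i, ‖d i‖ ^ 2 := by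
  rw [star_mulVec, mulVec_mulVec, dotProduct_mulVec, vecMul_vecMul, ← Matrix.mul_assoc, hX,
    vecMul_one, dotProduct, map_sum]
  simp [RCLike.conj_mul]

lemma mulVec_submatrix_inv_mulVec_apply {C : Matrix m n R} {e : n → m}
    (hC : IsUnit (C.submatrix e id).det) (v : n → R) (i : n) :
    (C *ᵥ ((C.submatrix e id)⁻¹ *ᵥ v)) (e i) = v i := by
  change ((C.submatrix e id) *ᵥ _) i = _
  rw [mulVec_mulVec, mul_nonsing_inv _ hC, one_mulVec]

lemma exists_pow_succ_mul_eq_mul [Fintype m] [DecidableEq m] {M : Matrix m m R}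
    {Y Z : ℕ → Matrix m n R} {W : ℕ → Matrix n n R} (hZ : ∀ k, Z (k + 1) = M * Y k)
    (hY : ∀ k, Y (k + 1) = Z (k + 1) * W (k + 1)) (hW : ∀ k, IsUnit (W (k + 1)).det) :
    ∀ k, ∃ Q : Matrix n n R, M ^ (k + 1) * Y 0 = Z (k + 1) * Q
  | 0 => ⟨1, by rw [pow_one, Matrix.mul_one, hZ]⟩
  | k + 1 => by
    obtain ⟨Q, hQ⟩ := exists_pow_succ_mul_eq_mul hZ hY hW k
    refine ⟨(W (k + 1))⁻¹ * Q, ?_⟩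
    rw [pow_succ', Matrix.mul_assoc, hQ,
      ← mul_nonsing_inv_cancel_right (W (k + 1)) (Z (k + 1)) (hW k), ← hY, hZ]
    simp only [Matrix.mul_assoc]

lemma range_mulVecLin_pow_succ_mul_le [Fintype m] [DecidableEq m] {M : Matrix m m R}
    {Y Z : ℕ → Matrix m n R} {W : ℕ → Matrix n n R} (hZ : ∀ k, Z (k + 1) = M * Y k)
    (hY : ∀ k, Y (k + 1) = Z (k + 1) * W (k + 1)) (hW : ∀ k, IsUnit (W (k + 1)).det)
    (k : ℕ) :
    LinearMap.range (M ^ (k + 1) * Y 0).mulVecLin ≤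
      LinearMap.range (Z (k + 1)).mulVecLin := by
  obtain ⟨Q, hQ⟩ := exists_pow_succ_mul_eq_mul hZ hY hW k
  rw [hQ, mulVecLin_mul]
  exact LinearMap.range_comp_le_range _ _

end Matrix

lemma sqrt_sum_norm_sq_le_mul {ι E F : Type*} [Fintype ι] [SeminormedAddCommGroup E]
    [SeminormedAddCommGroup F] {d : ι → E} {c : ι → F} {a : ℝ} (ha : 0 ≤ a)
    (h : ∀ i, ‖d i‖ ≤ a * ‖c i‖) : √(∑ i, ‖d i‖ ^ 2) ≤ a * √(∑ i, ‖c i‖ ^ 2) := by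
  calc √(∑ i, ‖d i‖ ^ 2) ≤ √(a ^ 2 * ∑ i, ‖c i‖ ^ 2) := by
        rw [Finset.mul_sum]
        gcongr with i
        rw [← mul_pow]
        exact pow_le_pow_left₀ (norm_nonneg _) (h i) 2
    _ = a * √(∑ i, ‖c i‖ ^ 2) := by rw [Real.sqrt_mul (sq_nonneg a), Real.sqrt_sq ha]

lemma norm_single_sub_div_pow_mul_le {𝕜 ι : Type*} [RCLike 𝕜] [LinearOrder ι] [DecidableEq ι]
    {f c : ι → 𝕜} {j m : ι} (hjm : j < m) (hf : ∀ a b, a ≤ b → ‖f b‖ ≤ ‖f a‖)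
    (hfj : f j ≠ 0) (hc : ∀ i < m, c i = (Pi.single j 1 : ι → 𝕜) i) (k : ℕ) (i : ι) :
    ‖(Pi.single j 1 : ι → 𝕜) i - (f i / f j) ^ k * c i‖ ≤ (‖f m‖ / ‖f j‖) ^ k * ‖c i‖ := by
  rcases lt_or_ge i m with hi | hi
  · rw [hc i hi]
    rcases eq_or_ne i j with rfl | hij
    · simp [div_self hfj]
      positivity
    · simp [hij]
  · rw [Pi.single_eq_of_ne (hjm.trans_le hi).ne', zero_sub, norm_neg, norm_mul, norm_pow,
      norm_div]
    gcongr
    exact hf _ _ hi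

open RCLike in
theorem exists_mem_range_conj_diagonal_pow_mul_dist_le {𝕜 : Type*} [RCLike 𝕜] {N n : ℕ}
    (hnN : n < N) {B X : Matrix (Fin N) (Fin N) 𝕜} (hX : Xᴴ * B * X = 1) {f : Fin N → 𝕜}
    (hf : ∀ a b, a ≤ b → ‖f b‖ ≤ ‖f a‖) (Y₀ : Matrix (Fin N) (Fin n) 𝕜)
    (hY₀ : IsUnit ((X.submatrix id (Fin.castLE hnN.le))ᴴ * B * Y₀)) (j : Fin N)
    (hj : (j : ℕ) < n) (hfj : f j ≠ 0) :
    ∃ α : ℝ, 0 ≤ α ∧ ∀ k : ℕ,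
      ∃ z ∈ LinearMap.range ((X * diagonal f * X⁻¹) ^ k * Y₀).mulVecLin,
        √(re (star ((fun i => X i j) - z) ⬝ᵥ B *ᵥ ((fun i => X i j) - z)))
          ≤ α * (‖f ⟨n, hnN⟩‖ / ‖f j‖) ^ k := by
  set e := Fin.castLE hnN.le
  set C := Xᴴ * B * Y₀
  have hCe : IsUnit (C.submatrix e id).det := by
    rw [← isUnit_iff_isUnit_det]
    convert hY₀ using 1
    ext
    simp [C, mul_apply, conjTranspose_apply]
  set u := (C.submatrix e id)⁻¹ *ᵥ ((Pi.single j 1 : Fin N → 𝕜) ∘ e)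
  set c := C *ᵥ u
  have hc : ∀ i < (⟨n, hnN⟩ : Fin N), c i = (Pi.single j 1 : Fin N → 𝕜) i := fun i hi =>
    mulVec_submatrix_inv_mulVec_apply hCe ((Pi.single j 1 : Fin N → 𝕜) ∘ e) ⟨i, hi⟩
  refine ⟨√(∑ i, ‖c i‖ ^ 2), Real.sqrt_nonneg _, fun k => ⟨_, ⟨(f j ^ k)⁻¹ • u, rfl⟩, ?_⟩⟩
  have hcoord :
      (fun i => X i j) - ((X * diagonal f * X⁻¹) ^ k * Y₀).mulVecLin ((f j ^ k)⁻¹ • u) =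
        X *ᵥ fun i => (Pi.single j 1 : Fin N → 𝕜) i - (f i / f j) ^ k * c i := by
    have hXinv : X⁻¹ = Xᴴ * B := inv_eq_left_inv hX
    have hcol : (fun i => X i j) = X *ᵥ Pi.single j 1 := (mulVec_single_one X j).symm
    rw [mulVecLin_apply, conj_diagonal_pow (isUnit_det_of_left_inverse hX), hXinv,
      show X * diagonal (f ^ k) * (Xᴴ * B) * Y₀ = X * (diagonal (f ^ k) * C) by
        simp only [C, Matrix.mul_assoc],
      ← mulVec_mulVec, ← mulVec_mulVec, mulVec_smul, hcol, ← mulVec_sub]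
    congr 1
    funext i
    simp only [Pi.sub_apply, mulVec_diagonal, Pi.pow_apply, Pi.smul_apply, smul_eq_mul, div_pow,
      sub_right_inj]
    ring
  rw [hcoord, re_star_mulVec_dotProduct_mulVec_mulVec hX]
  exact (sqrt_sum_norm_sq_le_mul (by positivity)
    (norm_single_sub_div_pow_mul_le (Fin.lt_def.2 hj) hf hfj hc k)).trans_eq (mul_comm _ _)

/-- **FEAST convergence theorem** (Güttel–Polizzi–Tang–Viaud, Theorem 2.2; adapted from
Saad).  If `|r(λ_n)| > 0` and `X_nᴴ B Y_0` is invertible, then for each `j = 1,…,n`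
there is a constant `α_j ≥ 0` such that, for all `k ≥ 1`, the `B`-norm distance of the
eigenvector `x_j` to the column span of `Z_k` is at most
`α_j · |r(λ_{n+1})/r(λ_j)|^k`. -/
theorem feast_subspace_iteration_bound
    (N n : ℕ) (hnN : n < N)
    (B X : Matrix (Fin N) (Fin N) ℂ)
    (lam : Fin N → ℝ)
    (hX : Xᴴ * B * X = 1)
    (r : ℝ → ℂ)
    (hord : ∀ i j : Fin N, i ≤ j → ‖r (lam j)‖ ≤ ‖r (lam i)‖)
    (rM : Matrix (Fin N) (Fin N) ℂ)
    (hrM : rM = X * Matrix.diagonal (fun i => r (lam i)) * X⁻¹)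
    (Y Z : ℕ → Matrix (Fin N) (Fin n) ℂ)
    (W : ℕ → Matrix (Fin n) (Fin n) ℂ)
    (hZ : ∀ k, Z (k + 1) = rM * Y k)
    (hW : ∀ k, (W (k + 1))ᴴ * ((Z (k + 1))ᴴ * B * Z (k + 1)) * W (k + 1) = 1)
    (hY : ∀ k, Y (k + 1) = Z (k + 1) * W (k + 1))
    (Xn : Matrix (Fin N) (Fin n) ℂ)
    (hXn : Xn = X.submatrix id (Fin.castLE hnN.le))
    (hrn : 0 < ‖r (lam ⟨n - 1, by omega⟩)‖)
    (hY0 : IsUnit (Xnᴴ * B * Y 0))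
    (Bnorm : (Fin N → ℂ) → ℝ)
    (hBnorm : ∀ w, Bnorm w = Real.sqrt ((star w ⬝ᵥ B.mulVec w).re)) :
    ∀ j : Fin N, (j : ℕ) < n →
      ∃ α : ℝ, 0 ≤ α ∧ ∀ k, 1 ≤ k →
        sInf {t : ℝ | ∃ z ∈ LinearMap.range (Z k).mulVecLin,
            t = Bnorm ((fun i => X i j) - z)}
          ≤ α * (‖r (lam ⟨n, hnN⟩)‖ / ‖r (lam j)‖) ^ k := by
  intro j hj
  have hrj : r (lam j) ≠ 0 :=
    norm_pos_iff.1 (hrn.trans_le (hord _ _ (Fin.le_def.2 (by dsimp only; omega))))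
  subst hXn hrM
  obtain ⟨α, hα, hdist⟩ :=
    exists_mem_range_conj_diagonal_pow_mul_dist_le hnN hX hord (Y 0) hY0 j hj hrj
  refine ⟨α, hα, fun k hk => ?_⟩
  obtain ⟨k, rfl⟩ := Nat.exists_eq_add_of_le' hk
  obtain ⟨z, hz, hz_dist⟩ := hdist (k + 1)
  have hz_mem := range_mulVecLin_pow_succ_mul_le hZ hY
    (fun k => isUnit_det_of_left_inverse (hW k)) k hz
  have hbdd : BddBelow {t : ℝ | ∃ z ∈ LinearMap.range (Z (k + 1)).mulVecLin,
      t = Bnorm ((fun i => X i j) - z)} :=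
    ⟨0, by rintro _ ⟨w, -, rfl⟩; rw [hBnorm]; positivity⟩
  exact (csInf_le hbdd ⟨z, hz_mem, rfl⟩).trans (by rwa [hBnorm])
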